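/- arXiv:1405.4712 — 5 statements merged into one kernel-verified Lean document; each statement's English description precedes it below -/
import Mathlib

section
/- For every real number x, the power series ∑_{n≥0} (2n+1) x^{2n} / (4^n · n! · (1/2)_n) equals cosh x + x·sinh x, where (a)_n denotes the Pochhammer symbol. -/
noncomputable def lam (ν x : ℝ) : ℝ :=
  ∑' n : ℕ, (2 * (n : ℝ) + 1) * x ^ (2 * n) /
    ((4 : ℝ) ^ n * (n.factorial : ℝ) * (ascPochhammer ℝ n).eval (ν + 1))

/-! The denominator at `ν = -1/2` is `(2n)!`, because `4ⁿ n! (1/2)ₙ = (2n)!`. The series then splits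
as `∑ x^(2n)/(2n)! + ∑ 2n x^(2n)/(2n)!`; the first is `cosh x`, and after the index shift
`2n/(2n)! = 1/(2n-1)!` the second is `x` times the odd series of `sinh x`. -/

open Nat

theorem four_pow_mul_factorial_mul_ascPochhammer_eval_half {K : Type*} [Field K] [CharZero K]
    (n : ℕ) : (4 : K) ^ n * n ! * (ascPochhammer K n).eval (1 / 2) = (2 * n)! := by
  induction n with
  | zero => simp
  | succ n ih =>
    rw [ascPochhammer_succ_eval, show 2 * (n + 1) = 2 * n + 1 + 1 by ring,
      factorial_succ, factorial_succ, factorial_succ, pow_succ]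
    push_cast
    linear_combination (4 * ((n : K) + 1) * (1 / 2 + n)) * ih

theorem Real.hasSum_two_mul_mul_pow_div_factorial (x : ℝ) :
    HasSum (fun n : ℕ ↦ 2 * (n : ℝ) * x ^ (2 * n) / (2 * n)!) (x * sinh x) := by
  have hshift : ∀ n : ℕ, 2 * ((n + 1 : ℕ) : ℝ) * x ^ (2 * (n + 1)) / (2 * (n + 1))! =
      x * (x ^ (2 * n + 1) / (2 * n + 1)!) := by
    intro n
    rw [show 2 * (n + 1) = 2 * n + 1 + 1 by ring, factorial_succ]
    push_cast
    field_simp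
    ring
  rw [← hasSum_nat_add_iff' 1]
  simp only [hshift, Finset.sum_range_one, cast_zero, mul_zero, zero_mul, zero_div, sub_zero]
  exact (hasSum_sinh x).mul_left x

theorem Real.hasSum_two_mul_add_one_mul_pow_div_factorial (x : ℝ) :
    HasSum (fun n : ℕ ↦ (2 * (n : ℝ) + 1) * x ^ (2 * n) / (2 * n)!) (cosh x + x * sinh x) := by
  convert (hasSum_cosh x).add (hasSum_two_mul_mul_pow_div_factorial x) using 1
  ext n
  ring

theorem stmt_1 (x : ℝ) : lam (-(1/2)) x = Real.cosh x + x * Real.sinh x := by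
  have hden (n : ℕ) : (4 : ℝ) ^ n * n ! * (ascPochhammer ℝ n).eval (-(1 / 2) + 1) = (2 * n)! := by
    rw [show (-(1 / 2) + 1 : ℝ) = 1 / 2 by norm_num,
      four_pow_mul_factorial_mul_ascPochhammer_eval_half]
  simp only [lam, hden]
  exact (Real.hasSum_two_mul_add_one_mul_pow_div_factorial x).tsum_eq
end

section
/- Let ν > -1 and define λ_ν(x) = ∑_{n≥0} (2n+1) x^{2n} / (4^n · n! · (ν+1)_n). If -1 < ν < 1/2, then λ_ν(x) > cosh x for all x > 0. -/
open Polynomial Nat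

section Pochhammer

variable {S : Type*} [CommSemiring S] [PartialOrder S] [IsOrderedRing S]

theorem ascPochhammer_eval_nonneg (n : ℕ) {s : S} (hs : 0 ≤ s) :
    0 ≤ (ascPochhammer S n).eval s := by
  induction n with
  | zero => simp
  | succ n ih => rw [ascPochhammer_succ_eval]; positivity

theorem ascPochhammer_eval_le_eval (n : ℕ) {a b : S} (ha : 0 ≤ a) (hab : a ≤ b) :
    (ascPochhammer S n).eval a ≤ (ascPochhammer S n).eval b := by
  induction n with
  | zero => simp
  | succ n ih =>
    simp only [ascPochhammer_succ_eval]
    exact mul_le_mul ih (add_le_add_left hab _) (by positivity)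
      (ascPochhammer_eval_nonneg n (ha.trans hab))

theorem pow_le_ascPochhammer_eval (n : ℕ) {a : S} (ha : 0 ≤ a) :
    a ^ n ≤ (ascPochhammer S n).eval a := by
  induction n with
  | zero => simp
  | succ n ih =>
    rw [pow_succ, ascPochhammer_succ_eval]
    exact mul_le_mul ih (le_add_of_nonneg_right n.cast_nonneg) ha
      (ascPochhammer_eval_nonneg n ha)

end Pochhammer

theorem four_pow_mul_factorial_mul_ascPochhammer_eval_three_halves {K : Type*} [Field K]
    [CharZero K] (n : ℕ) :
    4 ^ n * n ! * (ascPochhammer K n).eval (3 / 2) = (2 * n + 1)! := by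
  induction n with
  | zero => simp
  | succ n ih =>
    rw [ascPochhammer_succ_eval, show 2 * (n + 1) + 1 = 2 * n + 1 + 1 + 1 by ring,
      factorial_succ (2 * n + 1 + 1), factorial_succ (2 * n + 1), factorial_succ]
    push_cast
    rw [← ih]
    ring

noncomputable def lamTerm (a x : ℝ) (n : ℕ) : ℝ :=
  (2 * (n : ℝ) + 1) * x ^ (2 * n) / (4 ^ n * n ! * (ascPochhammer ℝ n).eval a)

theorem lam_eq_tsum_lamTerm (ν x : ℝ) : lam ν x = ∑' n, lamTerm (ν + 1) x n := rfl

theorem lamTerm_nonneg {a : ℝ} (ha : 0 ≤ a) (x : ℝ) (n : ℕ) : 0 ≤ lamTerm a x n := by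
  have := ascPochhammer_eval_nonneg n ha
  have := (even_two_mul n).pow_nonneg x
  unfold lamTerm
  positivity

theorem lamTerm_le_lamTerm_of_le {a b : ℝ} (ha : 0 < a) (hab : a ≤ b) (x : ℝ) (n : ℕ) :
    lamTerm b x n ≤ lamTerm a x n := by
  have := ascPochhammer_pos n a ha
  have := (even_two_mul n).pow_nonneg x
  unfold lamTerm
  gcongr
  exact ascPochhammer_eval_le_eval n ha.le hab

theorem lamTerm_three_halves (x : ℝ) (n : ℕ) :
    lamTerm (3 / 2) x n = x ^ (2 * n) / (2 * n)! := by
  rw [lamTerm, four_pow_mul_factorial_mul_ascPochhammer_eval_three_halves, factorial_succ]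
  push_cast
  field_simp

theorem lamTerm_one (a x : ℝ) : lamTerm a x 1 = 3 * x ^ 2 / (4 * a) := by
  norm_num [lamTerm]

theorem lamTerm_le_pow_div_factorial {a : ℝ} (ha : 0 < a) (x : ℝ) (n : ℕ) :
    lamTerm a x n ≤ (3 * x ^ 2 / (4 * a)) ^ n / n ! := by
  have h3 : 2 * (n : ℝ) + 1 ≤ 3 ^ n := by
    have := one_add_mul_le_pow (show (-2 : ℝ) ≤ 2 by norm_num) n
    norm_num at this
    linarith
  calc lamTerm a x n ≤ 3 ^ n * x ^ (2 * n) / (4 ^ n * n ! * a ^ n) := by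
        have := (even_two_mul n).pow_nonneg x
        unfold lamTerm
        gcongr
        exact pow_le_ascPochhammer_eval n ha.le
    _ = (3 * x ^ 2 / (4 * a)) ^ n / n ! := by
        rw [div_pow, mul_pow, mul_pow, pow_mul]
        field_simp

theorem summable_lamTerm {a : ℝ} (ha : 0 < a) (x : ℝ) : Summable (lamTerm a x) :=
  .of_nonneg_of_le (lamTerm_nonneg ha.le x) (lamTerm_le_pow_div_factorial ha x)
    (Real.summable_pow_div_factorial _)

theorem stmt_2 (ν : ℝ) (hν₁ : -1 < ν) (hν₂ : ν < 1/2) (x : ℝ) (hx : 0 < x) :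
    lam ν x > Real.cosh x := by
  have ha : 0 < ν + 1 := by linarith
  have hcosh : Real.cosh x = ∑' n, lamTerm (3 / 2) x n := by
    simp only [Real.cosh_eq_tsum, lamTerm_three_halves]
  have hlt : lamTerm (3 / 2) x 1 < lamTerm (ν + 1) x 1 := by
    rw [lamTerm_one, lamTerm_one]
    gcongr
    linarith
  rw [gt_iff_lt, hcosh, lam_eq_tsum_lamTerm]
  exact (summable_lamTerm ha x).tsum_lt_tsum_of_nonneg (lamTerm_nonneg (by norm_num) x)
    (lamTerm_le_lamTerm_of_le ha (by linarith) x) hlt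
end

section
/- Let μ > ν > -1 and define λ_ν(x) = ∑_{n≥0} (2n+1) x^{2n} / (4^n · n! · (ν+1)_n). Then the function x ↦ λ_ν(x)/λ_μ(x) is strictly increasing on (0,∞). -/
/-!
Write `λ_ν(x) = ∑ c_n(ν) t^n` with `t = x²`. The coefficient ratio
`c_n(ν) / c_n(μ) = (μ+1)_n / (ν+1)_n` is increasing in `n`, since each step multiplies it by
`(μ+1+n) / (ν+1+n) > 1`. A quotient of power series with nonnegative coefficients and increasing
coefficient ratio is increasing (Biernacki–Krzyż): for `s < t` the cross difference
`A(t) B(s) - A(s) B(t)` is a double series whose terms, paired with their transposes, are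
`(a_m b_n - a_n b_m)(t^m s^n - s^m t^n) ≥ 0`, strictly positive at `(m, n) = (0, 1)`.
-/

open Nat

lemma tsum_pos_of_add_swap {α : Type*} {D : α × α → ℝ} (hD : Summable D)
    (h : ∀ p : α × α, 0 ≤ D p + D p.swap) {q : α × α} (hq : 0 < D q + D q.swap) :
    0 < ∑' p, D p := by
  have hswap : Summable fun p : α × α => D p.swap := (Equiv.prodComm α α).summable_iff.2 hD
  have htwice : ∑' p : α × α, (D p + D p.swap) = 2 * ∑' p, D p := by
    have hswap_eq : ∑' p : α × α, D p.swap = ∑' p, D p := (Equiv.prodComm α α).tsum_eq D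
    rw [hD.tsum_add hswap, hswap_eq, two_mul]
  have := (hD.add hswap).tsum_pos h q hq
  linarith

lemma pow_mul_pow_le_pow_mul_pow {s t : ℝ} (hs : 0 ≤ s) (hst : s ≤ t) {m n : ℕ} (hmn : m ≤ n) :
    t ^ m * s ^ n ≤ s ^ m * t ^ n := by
  obtain ⟨k, rfl⟩ := Nat.exists_eq_add_of_le hmn
  have : 0 ≤ s * t := mul_nonneg hs (hs.trans hst)
  calc t ^ m * s ^ (m + k) = (s * t) ^ m * s ^ k := by ring
    _ ≤ (s * t) ^ m * t ^ k := by gcongr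
    _ = s ^ m * t ^ (m + k) := by ring

lemma pow_mul_pow_lt_pow_mul_pow {s t : ℝ} (hs : 0 < s) (hst : s < t) {m n : ℕ} (hmn : m < n) :
    t ^ m * s ^ n < s ^ m * t ^ n := by
  obtain ⟨k, rfl⟩ := Nat.exists_eq_add_of_lt hmn
  calc t ^ m * s ^ (m + k + 1) = (s * t) ^ m * s ^ (k + 1) := by ring
    _ < (s * t) ^ m * t ^ (k + 1) := by
        have : 0 < s * t := mul_pos hs (hs.trans hst)
        gcongr
    _ = s ^ m * t ^ (m + k + 1) := by ring

section RatioOfPowerSeries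

variable {a b : ℕ → ℝ}

lemma ratio_cross_nonneg (hab : ∀ m n, m ≤ n → a m * b n ≤ a n * b m) {s t : ℝ} (hs : 0 ≤ s)
    (hst : s ≤ t) (m n : ℕ) : 0 ≤ (a m * b n - a n * b m) * (t ^ m * s ^ n - s ^ m * t ^ n) := by
  wlog hmn : m ≤ n generalizing m n
  · linear_combination this n m (le_of_not_ge hmn)
  exact mul_nonneg_of_nonpos_of_nonpos (by linarith [hab m n hmn])
    (by linarith [pow_mul_pow_le_pow_mul_pow hs hst hmn])

theorem tsum_mul_tsum_lt_of_monotone_ratio (ha : ∀ n, 0 ≤ a n) (hb : ∀ n, 0 ≤ b n)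
    (hab : ∀ m n, m ≤ n → a m * b n ≤ a n * b m) {i j : ℕ} (hij : i < j)
    (hstrict : a i * b j < a j * b i) {s t : ℝ} (hs : 0 < s) (hst : s < t)
    (has : Summable fun n => a n * s ^ n) (hat : Summable fun n => a n * t ^ n)
    (hbs : Summable fun n => b n * s ^ n) (hbt : Summable fun n => b n * t ^ n) :
    (∑' n, a n * s ^ n) * ∑' n, b n * t ^ n < (∑' n, a n * t ^ n) * ∑' n, b n * s ^ n := by
  have ht : 0 < t := hs.trans hst
  have hterm_nonneg : ∀ {r : ℝ}, 0 < r → ∀ {c : ℕ → ℝ}, (∀ n, 0 ≤ c n) → ∀ n, 0 ≤ c n * r ^ n :=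
    fun hr _ hc n => mul_nonneg (hc n) (pow_nonneg hr.le n)
  have hF := has.mul_of_nonneg hbt (hterm_nonneg hs ha) (hterm_nonneg ht hb)
  have hG := hat.mul_of_nonneg hbs (hterm_nonneg ht ha) (hterm_nonneg hs hb)
  rw [has.tsum_mul_tsum hbt hF, hat.tsum_mul_tsum hbs hG, ← sub_pos, ← hG.tsum_sub hF]
  have hpair : ∀ m n : ℕ,
      (a m * t ^ m * (b n * s ^ n) - a m * s ^ m * (b n * t ^ n)) +
        (a n * t ^ n * (b m * s ^ m) - a n * s ^ n * (b m * t ^ m)) =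
      (a m * b n - a n * b m) * (t ^ m * s ^ n - s ^ m * t ^ n) :=
    fun m n => by ring
  refine tsum_pos_of_add_swap (hG.sub hF) (fun p => ?_) (q := (i, j)) ?_
  · simpa only [Prod.fst_swap, Prod.snd_swap, hpair] using
      ratio_cross_nonneg hab hs.le hst.le p.1 p.2
  · simpa only [Prod.fst_swap, Prod.snd_swap, hpair] using
      mul_pos_of_neg_of_neg (sub_neg.2 hstrict) (sub_neg.2 (pow_mul_pow_lt_pow_mul_pow hs hst hij))

theorem strictMonoOn_tsum_div_tsum_of_monotone_ratio (ha : ∀ n, 0 ≤ a n) (hb : ∀ n, 0 ≤ b n)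
    (hab : ∀ m n, m ≤ n → a m * b n ≤ a n * b m) {i j : ℕ} (hij : i < j)
    (hstrict : a i * b j < a j * b i)
    (hsa : ∀ t, 0 < t → Summable fun n => a n * t ^ n)
    (hsb : ∀ t, 0 < t → Summable fun n => b n * t ^ n) :
    StrictMonoOn (fun t => (∑' n, a n * t ^ n) / ∑' n, b n * t ^ n) (Set.Ioi 0) := by
  have hbi : 0 < b i :=
    pos_of_mul_pos_right ((mul_nonneg (ha i) (hb j)).trans_lt hstrict) (ha j)
  have hden : ∀ t, 0 < t → 0 < ∑' n, b n * t ^ n := fun t ht =>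
    (hsb t ht).tsum_pos (fun n => mul_nonneg (hb n) (pow_nonneg ht.le n)) i
      (mul_pos hbi (pow_pos ht i))
  intro s hs t ht hst
  rw [Set.mem_Ioi] at hs ht
  rw [div_lt_div_iff₀ (hden s hs) (hden t ht)]
  exact tsum_mul_tsum_lt_of_monotone_ratio ha hb hab hij hstrict hs hst
    (hsa s hs) (hsa t ht) (hsb s hs) (hsb t ht)

end RatioOfPowerSeries

lemma ascPochhammer_eval_mul_le_mul {a b : ℝ} (ha : 0 < a) (hab : a ≤ b) {m n : ℕ} (hmn : m ≤ n) :
    (ascPochhammer ℝ n).eval a * (ascPochhammer ℝ m).eval b ≤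
      (ascPochhammer ℝ m).eval a * (ascPochhammer ℝ n).eval b := by
  induction n, hmn using Nat.le_induction with
  | base => exact le_rfl
  | succ n _ ih =>
    have hPa := ascPochhammer_pos m a ha
    have hPb := ascPochhammer_pos n b (ha.trans_le hab)
    simp only [ascPochhammer_succ_eval]
    calc (ascPochhammer ℝ n).eval a * (a + n) * (ascPochhammer ℝ m).eval b
        = (ascPochhammer ℝ n).eval a * (ascPochhammer ℝ m).eval b * (a + n) := by ring
      _ ≤ (ascPochhammer ℝ m).eval a * (ascPochhammer ℝ n).eval b * (b + n) := by gcongr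
      _ = (ascPochhammer ℝ m).eval a * ((ascPochhammer ℝ n).eval b * (b + n)) := by ring

lemma min_one_pow_mul_factorial_le_ascPochhammer_eval {a : ℝ} (ha : 0 ≤ a) (n : ℕ) :
    min a 1 ^ n * n ! ≤ (ascPochhammer ℝ n).eval a := by
  induction n with
  | zero => simp
  | succ n ih =>
    have hmin : 0 ≤ min a 1 := le_min ha zero_le_one
    have hstep : min a 1 * (n + 1) ≤ a + n := by
      nlinarith [min_le_left a 1, min_le_right a 1, (n.cast_nonneg : (0 : ℝ) ≤ n)]
    rw [ascPochhammer_succ_eval, factorial_succ, cast_mul, cast_succ]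
    calc min a 1 ^ (n + 1) * ((n + 1) * n !) = min a 1 ^ n * n ! * (min a 1 * (n + 1)) := by ring
      _ ≤ (ascPochhammer ℝ n).eval a * (a + n) := by
        gcongr
        exact (mul_nonneg (pow_nonneg hmin n) (cast_nonneg _)).trans ih

noncomputable def lamCoeff (ν : ℝ) (n : ℕ) : ℝ :=
  (2 * n + 1) / (4 ^ n * n !) / (ascPochhammer ℝ n).eval (ν + 1)

lemma lam_eq_tsum (ν x : ℝ) : lam ν x = ∑' n, lamCoeff ν n * (x ^ 2) ^ n := by
  unfold lam lamCoeff
  congr 1 with n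
  rw [← pow_mul]
  ring

lemma lamCoeff_nonneg {ν : ℝ} (hν : -1 < ν) (n : ℕ) : 0 ≤ lamCoeff ν n := by
  unfold lamCoeff
  exact div_nonneg (by positivity) (ascPochhammer_pos n (ν + 1) (by linarith)).le

lemma summable_lamCoeff_mul_pow {ν : ℝ} (hν : -1 < ν) {t : ℝ} (ht : 0 ≤ t) :
    Summable fun n => lamCoeff ν n * t ^ n := by
  set ε := min (ν + 1) 1
  have hε : 0 < ε := lt_min (by linarith) one_pos
  refine (Real.summable_pow_div_factorial (t / ε)).of_nonneg_of_le
    (fun n => mul_nonneg (lamCoeff_nonneg hν n) (pow_nonneg ht n)) fun n => ?_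
  have hP := min_one_pow_mul_factorial_le_ascPochhammer_eval (by linarith : 0 ≤ ν + 1) n
  have hfact : (1 : ℝ) ≤ n ! := one_le_cast.2 n.factorial_pos
  have hlin : 2 * (n : ℝ) + 1 ≤ 4 ^ n :=
    calc 2 * (n : ℝ) + 1 = 1 + n * 2 := by ring
      _ ≤ (1 + 2) ^ n := one_add_mul_le_pow (by norm_num) n
      _ ≤ 4 ^ n := by gcongr; norm_num
  have hcoeff : (2 * n + 1) / (4 ^ n * n !) ≤ (1 : ℝ) := by
    rw [div_le_one (by positivity)]
    nlinarith [pow_pos (by norm_num : (0 : ℝ) < 4) n]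
  calc lamCoeff ν n * t ^ n ≤ 1 / (ε ^ n * n !) * t ^ n := by
        unfold lamCoeff
        gcongr
    _ = (t / ε) ^ n / n ! := by
        rw [div_pow]
        field_simp

lemma lamCoeff_mul_le {ν μ : ℝ} (hν : -1 < ν) (hνμ : ν ≤ μ) {m n : ℕ} (hmn : m ≤ n) :
    lamCoeff ν m * lamCoeff μ n ≤ lamCoeff ν n * lamCoeff μ m := by
  have hpos : ∀ {κ : ℝ}, ν ≤ κ → ∀ k, 0 < (ascPochhammer ℝ k).eval (κ + 1) :=
    fun h k => ascPochhammer_pos k _ (by linarith)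
  set c : ℕ → ℝ := fun k => (2 * k + 1) / (4 ^ k * k !)
  have hc : ∀ k, 0 ≤ c k := fun k => by positivity
  calc lamCoeff ν m * lamCoeff μ n
      = c m * c n / ((ascPochhammer ℝ m).eval (ν + 1) * (ascPochhammer ℝ n).eval (μ + 1)) := by
        unfold lamCoeff; ring
    _ ≤ c m * c n / ((ascPochhammer ℝ n).eval (ν + 1) * (ascPochhammer ℝ m).eval (μ + 1)) :=
        div_le_div_of_nonneg_left (mul_nonneg (hc m) (hc n))
          (mul_pos (hpos le_rfl n) (hpos hνμ m))
          (ascPochhammer_eval_mul_le_mul (by linarith) (by linarith) hmn)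
    _ = lamCoeff ν n * lamCoeff μ m := by unfold lamCoeff; ring

lemma lamCoeff_zero_mul_lt {ν μ : ℝ} (hν : -1 < ν) (hνμ : ν < μ) :
    lamCoeff ν 0 * lamCoeff μ 1 < lamCoeff ν 1 * lamCoeff μ 0 := by
  have : 0 < ν + 1 := by linarith
  simp only [lamCoeff, ascPochhammer_zero, ascPochhammer_one, Polynomial.eval_one,
    Polynomial.eval_X, pow_zero, pow_one, factorial_zero, factorial_one, cast_zero, cast_one]
  norm_num
  gcongr

theorem stmt_6 (μ ν : ℝ) (hν : -1 < ν) (hμν : ν < μ) :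
    StrictMonoOn (fun x => lam ν x / lam μ x) (Set.Ioi 0) := by
  have hμ : -1 < μ := hν.trans hμν
  have hseries : StrictMonoOn
      (fun t => (∑' n, lamCoeff ν n * t ^ n) / ∑' n, lamCoeff μ n * t ^ n) (Set.Ioi 0) :=
    strictMonoOn_tsum_div_tsum_of_monotone_ratio (lamCoeff_nonneg hν) (lamCoeff_nonneg hμ)
      (fun _ _ => lamCoeff_mul_le hν hμν.le) zero_lt_one (lamCoeff_zero_mul_lt hν hμν)
      (fun _ ht => summable_lamCoeff_mul_pow hν ht.le)
      (fun _ ht => summable_lamCoeff_mul_pow hμ ht.le)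
  have hsq : StrictMonoOn (fun x : ℝ => x ^ 2) (Set.Ioi 0) :=
    (pow_left_strictMonoOn₀ two_ne_zero).mono Set.Ioi_subset_Ici_self
  simpa only [lam_eq_tsum, Function.comp_def] using
    hseries.comp hsq fun _ hx => Set.mem_Ioi.2 (pow_pos hx 2)
end

section
/- For all x, y in the interval (-r, r), where r ≈ 0.8603 is the first positive root of cos t = t·sin t, the inequality (cosh((x+y)/2) + ((x+y)/2)·sinh((x+y)/2))² · (cos x - x·sin x)(cos y - y·sin y) ≤ (cos((x+y)/2) - ((x+y)/2)·sin((x+y)/2))² · (cosh x + x·sinh x)(cosh y + y·sinh y). -/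
/-!
Write `g t = cos t - t sin t` and `h t = cosh t + t sinh t`. A direct computation gives
`g'' g - g'^2 = -(3 + sin² t + t²) < 0` and `h'' h - h'^2 = 3 - sinh² t - t²`, so `log g` is
concave wherever `g > 0` and `log h` is convex on `[-1, 1]`. Since `g 0 = 1` and `g` is even,
`g` has no zero and hence stays positive on `(-r, r)`; as `g 1 < 0`, this also forces `r ≤ 1`.
With `m = (x + y) / 2`, the midpoint inequalities `g x g y ≤ g(m)²` and `h(m)² ≤ h x h y` then
multiply to the claim.
-/

open Real Set

section LogConvexity

variable {s : Set ℝ} {f f' f'' : ℝ → ℝ}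

theorem convexOn_log_of_hasDerivAt2 (hs : Convex ℝ s) (hf : ∀ x ∈ s, HasDerivAt f (f' x) x)
    (hf' : ∀ x ∈ s, HasDerivAt f' (f'' x) x) (hpos : ∀ x ∈ s, 0 < f x)
    (hf'' : ∀ x ∈ s, f' x ^ 2 ≤ f'' x * f x) : ConvexOn ℝ s (fun x => log (f x)) := by
  refine convexOn_of_hasDerivWithinAt2_nonneg hs (f' := fun x => f' x / f x)
    (f'' := fun x => (f'' x * f x - f' x * f' x) / f x ^ 2)
    (fun x hx => ((hf x hx).continuousAt.log (hpos x hx).ne').continuousWithinAt)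
    (fun x hx => ?_) (fun x hx => ?_) (fun x hx => ?_) <;> replace hx := interior_subset hx
  · exact ((hf x hx).log (hpos x hx).ne').hasDerivWithinAt
  · exact ((hf' x hx).div (hf x hx) (hpos x hx).ne').hasDerivWithinAt
  · exact div_nonneg (by linarith [hf'' x hx]) (sq_nonneg _)

theorem concaveOn_log_of_hasDerivAt2 (hs : Convex ℝ s) (hf : ∀ x ∈ s, HasDerivAt f (f' x) x)
    (hf' : ∀ x ∈ s, HasDerivAt f' (f'' x) x) (hpos : ∀ x ∈ s, 0 < f x)
    (hf'' : ∀ x ∈ s, f'' x * f x ≤ f' x ^ 2) : ConcaveOn ℝ s (fun x => log (f x)) := by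
  refine concaveOn_of_hasDerivWithinAt2_nonpos hs (f' := fun x => f' x / f x)
    (f'' := fun x => (f'' x * f x - f' x * f' x) / f x ^ 2)
    (fun x hx => ((hf x hx).continuousAt.log (hpos x hx).ne').continuousWithinAt)
    (fun x hx => ?_) (fun x hx => ?_) (fun x hx => ?_) <;> replace hx := interior_subset hx
  · exact ((hf x hx).log (hpos x hx).ne').hasDerivWithinAt
  · exact ((hf' x hx).div (hf x hx) (hpos x hx).ne').hasDerivWithinAt
  · exact div_nonpos_of_nonpos_of_nonneg (by linarith [hf'' x hx]) (sq_nonneg _)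

variable {x y : ℝ}

theorem sq_midpoint_le_mul_of_convexOn_log (hf : ConvexOn ℝ s (fun x => log (f x)))
    (hpos : ∀ x ∈ s, 0 < f x) (hx : x ∈ s) (hy : y ∈ s) :
    f ((x + y) / 2) ^ 2 ≤ f x * f y := by
  have hm : (1 / 2 : ℝ) • x + (1 / 2 : ℝ) • y = (x + y) / 2 := by
    simp only [smul_eq_mul]
    ring
  have hlog := hf.2 hx hy (by norm_num) (by norm_num) (add_halves 1)
  have hmem := hf.1 hx hy (by norm_num) (by norm_num) (add_halves 1)
  rw [hm] at hlog hmem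
  rw [smul_eq_mul, smul_eq_mul] at hlog
  rw [← log_le_log_iff (pow_pos (hpos _ hmem) 2) (mul_pos (hpos x hx) (hpos y hy)), log_pow,
    log_mul (hpos x hx).ne' (hpos y hy).ne']
  push_cast
  linarith

theorem mul_le_sq_midpoint_of_concaveOn_log (hf : ConcaveOn ℝ s (fun x => log (f x)))
    (hpos : ∀ x ∈ s, 0 < f x) (hx : x ∈ s) (hy : y ∈ s) :
    f x * f y ≤ f ((x + y) / 2) ^ 2 := by
  have hm : (1 / 2 : ℝ) • x + (1 / 2 : ℝ) • y = (x + y) / 2 := by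
    simp only [smul_eq_mul]
    ring
  have hlog := hf.2 hx hy (by norm_num) (by norm_num) (add_halves 1)
  have hmem := hf.1 hx hy (by norm_num) (by norm_num) (add_halves 1)
  rw [hm] at hlog hmem
  rw [smul_eq_mul, smul_eq_mul] at hlog
  rw [← log_le_log_iff (mul_pos (hpos x hx) (hpos y hy)) (pow_pos (hpos _ hmem) 2), log_pow,
    log_mul (hpos x hx).ne' (hpos y hy).ne']
  push_cast
  linarith

end LogConvexity

noncomputable def cosSubMulSin (t : ℝ) : ℝ := cos t - t * sin t

noncomputable def coshAddMulSinh (t : ℝ) : ℝ := cosh t + t * sinh t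

theorem cosSubMulSin_zero : cosSubMulSin 0 = 1 := by simp [cosSubMulSin]

theorem cosSubMulSin_neg (t : ℝ) : cosSubMulSin (-t) = cosSubMulSin t := by
  simp [cosSubMulSin]

theorem continuous_cosSubMulSin : Continuous cosSubMulSin :=
  continuous_cos.sub (continuous_id.mul continuous_sin)

theorem hasDerivAt_cosSubMulSin (t : ℝ) :
    HasDerivAt cosSubMulSin (-(2 * sin t + t * cos t)) t :=
  ((hasDerivAt_cos t).sub ((hasDerivAt_id t).mul (hasDerivAt_sin t))).congr_deriv
    (by simp only [id, one_mul]; ring)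

theorem hasDerivAt_coshAddMulSinh (t : ℝ) :
    HasDerivAt coshAddMulSinh (2 * sinh t + t * cosh t) t :=
  ((hasDerivAt_cosh t).add ((hasDerivAt_id t).mul (hasDerivAt_sinh t))).congr_deriv
    (by simp only [id, one_mul]; ring)

theorem coshAddMulSinh_pos (t : ℝ) : 0 < coshAddMulSinh t := by
  have : 0 ≤ t * sinh t := mul_nonneg_iff.2 <| by
    rcases le_total 0 t with ht | ht
    · exact .inl ⟨ht, sinh_nonneg_iff.2 ht⟩
    · exact .inr ⟨ht, sinh_nonpos_iff.2 ht⟩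
  unfold coshAddMulSinh
  linarith [one_le_cosh t]

theorem cosSubMulSin_one_neg : cosSubMulSin 1 < 0 := by
  have hπ : π / 4 < 1 := by linarith [pi_lt_d2]
  have h1 : cos 1 < cos (π / 4) :=
    cos_lt_cos_of_nonneg_of_le_pi (by positivity) (by linarith [pi_gt_three]) hπ
  have h2 : sin (π / 4) < sin 1 :=
    sin_lt_sin_of_lt_of_le_pi_div_two (by linarith [pi_gt_three]) (by linarith [pi_gt_three]) hπ
  rw [cos_pi_div_four] at h1
  rw [sin_pi_div_four] at h2
  simp only [cosSubMulSin]
  linarith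

theorem sinh_sq_add_sq_le_three {t : ℝ} (ht : t ∈ Icc (-1) 1) : sinh t ^ 2 + t ^ 2 ≤ 3 := by
  have habs : |t| ≤ 1 := abs_le.2 ht
  have hsinh_one : sinh 1 < 1.4 := by
    rw [sinh_eq]
    linarith [exp_one_lt_d9, exp_pos (-1)]
  have hsinh : |sinh t| ≤ 1.4 := ((abs_sinh t).trans_le (sinh_le_sinh.2 habs)).trans hsinh_one.le
  have hsinh_sq : sinh t ^ 2 ≤ 1.4 ^ 2 := sq_le_sq' (abs_le.1 hsinh).1 (abs_le.1 hsinh).2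
  have ht_sq : t ^ 2 ≤ 1 := (sq_le_one_iff_abs_le_one t).2 habs
  norm_num at hsinh_sq
  linarith

theorem cosSubMulSin_pos_of_mem_Ioo {r t : ℝ}
    (hfirst : ∀ t, 0 < t → t < r → cos t ≠ t * sin t)
    (ht : t ∈ Ioo (-r) r) : 0 < cosSubMulSin t := by
  by_contra! hle
  have hr : 0 < r := by linarith [ht.1, ht.2]
  have h0 : (0 : ℝ) ∈ Ioo (-r) r := ⟨neg_lt_zero.2 hr, hr⟩
  obtain ⟨c, hc, hc0⟩ := isPreconnected_Ioo.intermediate_value ht h0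
    continuous_cosSubMulSin.continuousOn ⟨hle, cosSubMulSin_zero ▸ zero_le_one⟩
  have habs : cosSubMulSin |c| = 0 := by
    rcases abs_choice c with h | h
    · rwa [h]
    · rwa [h, cosSubMulSin_neg]
  have hc_ne : c ≠ 0 := by
    rintro rfl
    exact one_ne_zero (cosSubMulSin_zero ▸ hc0)
  exact hfirst |c| (abs_pos.2 hc_ne) (abs_lt.2 hc) (sub_eq_zero.1 habs)

theorem le_one_of_forall_cos_ne_mul_sin {r : ℝ}
    (hfirst : ∀ t, 0 < t → t < r → cos t ≠ t * sin t) : r ≤ 1 := by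
  by_contra! hr
  exact (cosSubMulSin_pos_of_mem_Ioo hfirst ⟨by linarith, hr⟩).not_gt cosSubMulSin_one_neg

theorem concaveOn_log_cosSubMulSin {s : Set ℝ} (hs : Convex ℝ s)
    (hpos : ∀ t ∈ s, 0 < cosSubMulSin t) : ConcaveOn ℝ s (fun t => log (cosSubMulSin t)) := by
  refine concaveOn_log_of_hasDerivAt2 hs (fun t _ => hasDerivAt_cosSubMulSin t)
    (f'' := fun t => -(3 * cos t - t * sin t)) (fun t _ => ?_) hpos fun t _ => ?_
  · exact (((hasDerivAt_sin t).const_mul 2).add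
      ((hasDerivAt_id t).mul (hasDerivAt_cos t))).neg.congr_deriv (by simp only [id]; ring)
  · have key : (2 * sin t + t * cos t) ^ 2 + (3 * cos t - t * sin t) * cosSubMulSin t =
        3 + sin t ^ 2 + t ^ 2 := by
      simp only [cosSubMulSin]
      linear_combination (3 + t ^ 2) * sin_sq_add_cos_sq t
    linarith [sq_nonneg t, sq_nonneg (sin t)]

theorem convexOn_log_coshAddMulSinh :
    ConvexOn ℝ (Icc (-1) 1) (fun t => log (coshAddMulSinh t)) := by
  refine convexOn_log_of_hasDerivAt2 (convex_Icc _ _) (fun t _ => hasDerivAt_coshAddMulSinh t)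
    (f'' := fun t => 3 * cosh t + t * sinh t) (fun t _ => ?_) (fun t _ => coshAddMulSinh_pos t)
    fun t ht => ?_
  · exact (((hasDerivAt_sinh t).const_mul 2).add
      ((hasDerivAt_id t).mul (hasDerivAt_cosh t))).congr_deriv (by simp only [id]; ring)
  · have key : (3 * cosh t + t * sinh t) * coshAddMulSinh t - (2 * sinh t + t * cosh t) ^ 2 =
        3 - sinh t ^ 2 - t ^ 2 := by
      simp only [coshAddMulSinh]
      linear_combination (3 - t ^ 2) * cosh_sq_sub_sinh_sq t
    linarith [sinh_sq_add_sq_le_three ht]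

theorem stmt_14_general (r : ℝ)
    (hfirst : ∀ t, 0 < t → t < r → Real.cos t ≠ t * Real.sin t)
    (x y : ℝ) (hx : x ∈ Set.Ioo (-r) r) (hy : y ∈ Set.Ioo (-r) r) :
    (Real.cosh ((x + y) / 2) + ((x + y) / 2) * Real.sinh ((x + y) / 2)) ^ 2 *
        ((Real.cos x - x * Real.sin x) * (Real.cos y - y * Real.sin y)) ≤
      (Real.cos ((x + y) / 2) - ((x + y) / 2) * Real.sin ((x + y) / 2)) ^ 2 *
        ((Real.cosh x + x * Real.sinh x) * (Real.cosh y + y * Real.sinh y)) := by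
  have hg_pos : ∀ t ∈ Ioo (-r) r, 0 < cosSubMulSin t :=
    fun t ht => cosSubMulSin_pos_of_mem_Ioo hfirst ht
  have hg := mul_le_sq_midpoint_of_concaveOn_log
    (concaveOn_log_cosSubMulSin (convex_Ioo _ _) hg_pos) hg_pos hx hy
  have hr : r ≤ 1 := le_one_of_forall_cos_ne_mul_sin hfirst
  have hh := sq_midpoint_le_mul_of_convexOn_log
    (convexOn_log_coshAddMulSinh.subset (Ioo_subset_Icc_self.trans (Icc_subset_Icc (by linarith)
      hr)) (convex_Ioo _ _)) (fun t _ => coshAddMulSinh_pos t) hx hy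
  calc _ ≤ coshAddMulSinh x * coshAddMulSinh y * cosSubMulSin ((x + y) / 2) ^ 2 :=
        mul_le_mul hh hg (mul_pos (hg_pos x hx) (hg_pos y hy)).le
          (mul_pos (coshAddMulSinh_pos x) (coshAddMulSinh_pos y)).le
    _ = _ := mul_comm _ _

theorem stmt_14 (r : ℝ) (hr : 0 < r) (hroot : Real.cos r = r * Real.sin r)
    (hfirst : ∀ t, 0 < t → t < r → Real.cos t ≠ t * Real.sin t)
    (x y : ℝ) (hx : x ∈ Set.Ioo (-r) r) (hy : y ∈ Set.Ioo (-r) r) :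
    (Real.cosh ((x + y) / 2) + ((x + y) / 2) * Real.sinh ((x + y) / 2)) ^ 2 *
        ((Real.cos x - x * Real.sin x) * (Real.cos y - y * Real.sin y)) ≤
      (Real.cos ((x + y) / 2) - ((x + y) / 2) * Real.sin ((x + y) / 2)) ^ 2 *
        ((Real.cosh x + x * Real.sinh x) * (Real.cosh y + y * Real.sinh y)) :=
  stmt_14_general r hfirst x y hx hy
end

section
/- Let ν > -1 and let (α_{ν,n})_{n≥1} be a strictly increasing sequence of positive reals with ∑_{n≥1} 1/α_{ν,n}² = 3/(4(ν+1)), and suppose λ_ν(x) = ∏_{n≥1} (1 + x²/α_{ν,n}²) converges for all real x. Then for all x with 0 < x < α_{ν,1}: 1 ≤ λ_ν(x) ≤ ((α_{ν,1}² + x²)/(α_{ν,1}² - x²))^{3α_{ν,1}²/(8(ν+1))}. -/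
/-!
Since `log (1 + t) ≤ t`, the product is at most `exp (x² ∑ 1 / αₙ²) = exp (3 x² / (4 (ν + 1)))`.
With `u = x² / α₁²`, the series of `log (1 + u) - log (1 - u) = 2 (u + u³/3 + u⁵/5 + ⋯)` gives
`2 u ≤ log ((1 + u) / (1 - u))`, and raising this to the power `3 α₁² / (8 (ν + 1))` yields the bound.
-/

open Real

namespace Real

theorem tprod_one_add_le_exp_tsum {ι : Type*} {f : ι → ℝ} (hf : ∀ i, 0 ≤ f i)
    (hs : Summable f) : ∏' i, (1 + f i) ≤ exp (∑' i, f i) :=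
  le_of_tendsto' (Real.multipliable_one_add_of_summable hs).hasProd fun s =>
    (prod_one_add_le_exp_sum s hf).trans <| exp_le_exp.mpr <| hs.sum_le_tsum s fun i _ => hf i

theorem two_mul_le_log_div_one_sub {u : ℝ} (hu₀ : 0 ≤ u) (hu₁ : u < 1) :
    2 * u ≤ log ((1 + u) / (1 - u)) := by
  have hseries := hasSum_log_sub_log_of_abs_lt_one (abs_lt.mpr ⟨by linarith, hu₁⟩)
  rw [log_div (by linarith) (by linarith)]
  simpa using le_hasSum hseries 0 fun k _ => by positivity

theorem exp_two_mul_mul_div_le_rpow {b y c : ℝ} (hy : 0 ≤ y) (hyb : y < b) (hc : 0 ≤ c) :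
    exp (2 * c * y / b) ≤ ((b + y) / (b - y)) ^ c := by
  have hb : 0 < b := hy.trans_lt hyb
  have hratio : (1 + y / b) / (1 - y / b) = (b + y) / (b - y) := by
    field_simp
  have hlog := two_mul_le_log_div_one_sub (div_nonneg hy hb.le) ((div_lt_one hb).mpr hyb)
  rw [hratio] at hlog
  rw [rpow_def_of_pos (div_pos (by linarith) (by linarith)), exp_le_exp]
  calc 2 * c * y / b = c * (2 * (y / b)) := by ring
    _ ≤ c * log ((b + y) / (b - y)) := mul_le_mul_of_nonneg_left hlog hc
    _ = log ((b + y) / (b - y)) * c := mul_comm _ _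

end Real

theorem stmt_15_general (ν : ℝ) (hν : -1 < ν) (a : ℕ → ℝ)
    (ha_sum : ∑' n, 1 / (a n) ^ 2 = 3 / (4 * (ν + 1)))
    (x : ℝ) (hx₀ : 0 < x) (hx₁ : x < a 0) :
    1 ≤ ∏' n, (1 + x ^ 2 / (a n) ^ 2) ∧
      ∏' n, (1 + x ^ 2 / (a n) ^ 2) ≤
        (((a 0) ^ 2 + x ^ 2) / ((a 0) ^ 2 - x ^ 2)) ^ (3 * (a 0) ^ 2 / (8 * (ν + 1))) := by
  have hν₁ : 0 < ν + 1 := by linarith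
  have ha₀ : a 0 ≠ 0 := (hx₀.trans hx₁).ne'
  have hsum : Summable fun n => 1 / (a n) ^ 2 := by
    by_contra h
    rw [tsum_eq_zero_of_not_summable h] at ha_sum
    exact (div_pos three_pos (by positivity)).ne' ha_sum.symm
  have hterms : Summable fun n => x ^ 2 / (a n) ^ 2 :=
    (hsum.mul_left (x ^ 2)).congr fun n => by ring
  refine ⟨ge_of_tendsto' (Real.multipliable_one_add_of_summable hterms).hasProd fun s =>
    Finset.one_le_prod fun n _ => le_add_of_nonneg_right (by positivity), ?_⟩
  calc ∏' n, (1 + x ^ 2 / (a n) ^ 2)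
      ≤ exp (∑' n, x ^ 2 / (a n) ^ 2) := tprod_one_add_le_exp_tsum (fun n => by positivity) hterms
    _ = exp (2 * (3 * (a 0) ^ 2 / (8 * (ν + 1))) * x ^ 2 / (a 0) ^ 2) := by
        simp_rw [div_eq_mul_one_div (x ^ 2), tsum_mul_left, ha_sum]
        congr 1
        field_simp
        ring
    _ ≤ _ := exp_two_mul_mul_div_le_rpow (sq_nonneg x) (pow_lt_pow_left₀ hx₁ hx₀.le two_ne_zero)
        (by positivity)

theorem stmt_15 (ν : ℝ) (hν : -1 < ν) (a : ℕ → ℝ)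
    (ha_pos : ∀ n, 0 < a n) (ha_mono : StrictMono a)
    (ha_sum : ∑' n, 1 / (a n) ^ 2 = 3 / (4 * (ν + 1)))
    (hmul : ∀ x : ℝ, Multipliable fun n => 1 + x ^ 2 / (a n) ^ 2)
    (x : ℝ) (hx₀ : 0 < x) (hx₁ : x < a 0) :
    1 ≤ ∏' n, (1 + x ^ 2 / (a n) ^ 2) ∧
      ∏' n, (1 + x ^ 2 / (a n) ^ 2) ≤
        (((a 0) ^ 2 + x ^ 2) / ((a 0) ^ 2 - x ^ 2)) ^ (3 * (a 0) ^ 2 / (8 * (ν + 1))) :=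
  stmt_15_general ν hν a ha_sum x hx₀ hx₁
end
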